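/- Fix δ with 0 < δ ≤ 1/2. Let (n_k) and (N_k) be sequences of positive integers with n_k → ∞, 2 n_k ≤ N_k ≤ n_k(n_k+3)/2, and N_k / n_k² → δ. Then (τ₃(n_k, N_k) − √2·N_k²) / N_k^{3/2} converges to −√(2δ)/8, where τ₃(n, N) = N·√( 2N(n·A₁ + 2(N−n−1)²·B₁) / (n²(n−1)² + 4n(N−n−1)(N−2n)) ), with A₁ = N n³ + (2N−1)n² − (N−1)(7N−2)n + (N−1)²(2N+3) and B₁ = √(n(n−1)N(N−n−1)). -/

import Mathlib

open Filter

/-- `A₁ = N n³ + (2N−1)n² − (N−1)(7N−2)n + (N−1)²(2N+3)`. -/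
noncomputable def A₁ (n N : ℝ) : ℝ :=
  N * n ^ 3 + (2 * N - 1) * n ^ 2 - (N - 1) * (7 * N - 2) * n + (N - 1) ^ 2 * (2 * N + 3)

/-- `B₁ = √(n(n−1)N(N−n−1))`. -/
noncomputable def B₁ (n N : ℝ) : ℝ :=
  Real.sqrt (n * (n - 1) * N * (N - n - 1))

/-- The degree-3 universal upper bound
`τ₃(n, N) = N·√( 2N(n·A₁ + 2(N−n−1)²·B₁) / (n²(n−1)² + 4n(N−n−1)(N−2n)) )`. -/
noncomputable def tau3 (n N : ℕ) : ℝ :=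
  (N : ℝ) * Real.sqrt
    (2 * N * ((n : ℝ) * A₁ n N + 2 * ((N : ℝ) - n - 1) ^ 2 * B₁ n N)
      / ((n : ℝ) ^ 2 * ((n : ℝ) - 1) ^ 2 + 4 * n * ((N : ℝ) - n - 1) * ((N : ℝ) - 2 * n)))

/-!
With `t = 1/n` and `x = N/n²` the radicand of `τ₃(n, N)` is `N² · g(t, x)` for an algebraic
function `g` with `g(0, x) = 2` and `g(t, x) − 2 = t · h(t, x)`, `h` continuous at `(0, δ)` with
`h(0, δ) = −1/2`. Hence `(τ₃ − √2 N²)/N^{3/2} = √N (√g − √2) = √x · h/(√g + √2)`, which tends to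
`√δ · (−1/2)/(2√2) = −√(2δ)/8`.
-/

open Topology

namespace Tau3

/-- At `t = 1/n`, `x = N/n²`: `num = t⁷ · n A₁`, `root = t³ · B₁`, and `den` is `t⁵` times the
denominator of `τ₃`. -/
noncomputable def num (t x : ℝ) : ℝ :=
  2 * x ^ 3 + t * x - 7 * t * x ^ 2 + 2 * t ^ 2 * x - t ^ 2 * x ^ 2 + 9 * t ^ 3 * x - t ^ 4
    - 4 * t ^ 4 * x - 2 * t ^ 5 + 3 * t ^ 6

noncomputable def root (t x : ℝ) : ℝ := √((1 - t) * x * (x - t - t ^ 2))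

noncomputable def den (t x : ℝ) : ℝ := 4 * (x - t - t ^ 2) * (x - 2 * t) + t * (1 - t) ^ 2

noncomputable def radicand (t x : ℝ) : ℝ :=
  2 * (num t x + 2 * (x - t - t ^ 2) ^ 2 * root t x) / (x * den t x)

noncomputable def radicandSlopePoly (t x : ℝ) : ℝ :=
  2 * x ^ 2 - 4 * t * x - 2 * t * x ^ 2 + 8 * t ^ 2 * x - 2 * t ^ 3 - 4 * t ^ 3 * x - 4 * t ^ 4
    + 6 * t ^ 5

/-- `(radicand t x − 2)/t`, with `root − x` rationalised so that it is continuous at `t = 0`. -/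
noncomputable def radicandSlope (t x : ℝ) : ℝ :=
  (radicandSlopePoly t x - 4 * (x - t - t ^ 2) ^ 2 * x * (1 + x - t ^ 2) / (root t x + x))
    / (x * den t x)

lemma two_mul_num_sub_eq (t x : ℝ) :
    2 * num t x + 4 * x * (x - t - t ^ 2) ^ 2 - 2 * x * den t x = t * radicandSlopePoly t x := by
  unfold num den radicandSlopePoly; ring

lemma den_zero (x : ℝ) : den 0 x = 4 * x ^ 2 := by
  unfold den; ring

section

variable {t x : ℝ}

lemma sub_sub_sq_nonneg (ht0 : 0 ≤ t) (ht1 : t ≤ 1) (hx : 2 * t ≤ x) : 0 ≤ x - t - t ^ 2 := by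
  nlinarith

lemma sq_sub_root_sq (ht0 : 0 ≤ t) (ht1 : t ≤ 1) (hx : 2 * t ≤ x) :
    x ^ 2 - root t x ^ 2 = t * x * (1 + x - t ^ 2) := by
  have hx0 : 0 ≤ x := by linarith
  rw [root, Real.sq_sqrt
    (mul_nonneg (mul_nonneg (sub_nonneg.2 ht1) hx0) (sub_sub_sq_nonneg ht0 ht1 hx))]
  ring

lemma den_pos (ht0 : 0 < t) (ht1 : t < 1) (hx : 2 * t ≤ x) : 0 < den t x := by
  have hw := sub_sub_sq_nonneg ht0.le ht1.le hx
  have hx2 : 0 ≤ x - 2 * t := sub_nonneg.2 hx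
  have := mul_pos ht0 (pow_pos (sub_pos.2 ht1) 2)
  unfold den; nlinarith

lemma radicand_sub_two (ht0 : 0 < t) (ht1 : t < 1) (hx : 2 * t ≤ x) :
    radicand t x - 2 = t * radicandSlope t x := by
  have hx0 : 0 < x := by linarith
  have hden := den_pos ht0 ht1 hx
  have hroot : 0 < root t x + x := add_pos_of_nonneg_of_pos (Real.sqrt_nonneg _) hx0
  have hpoly := two_mul_num_sub_eq t x
  have hsq := sq_sub_root_sq ht0.le ht1.le hx
  unfold radicand radicandSlope
  field_simp
  linear_combination (root t x + x) * hpoly - 4 * (x - t - t ^ 2) ^ 2 * hsq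

lemma root_zero (hx : 0 ≤ x) : root 0 x = x := by
  rw [root, show (1 - 0) * x * (x - 0 - 0 ^ 2) = x * x by ring, Real.sqrt_mul_self hx]

lemma radicand_zero (hx : 0 < x) : radicand 0 x = 2 := by
  rw [radicand, root_zero hx.le, den_zero]
  unfold num
  field_simp
  ring

lemma radicandSlope_zero (hx : 0 < x) : radicandSlope 0 x = -1 / 2 := by
  rw [radicandSlope, root_zero hx.le, den_zero]
  unfold radicandSlopePoly
  field_simp
  ring

end

lemma continuous_root : Continuous (Function.uncurry root) := by
  unfold Function.uncurry root; fun_prop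

lemma continuousAt_radicand {p : ℝ × ℝ} (h : p.2 * den p.1 p.2 ≠ 0) :
    ContinuousAt (Function.uncurry radicand) p := by
  have := continuous_root
  unfold Function.uncurry radicand num den
  unfold Function.uncurry at this
  fun_prop (disch := exact h)

lemma continuousAt_radicandSlope {p : ℝ × ℝ} (h : p.2 * den p.1 p.2 ≠ 0)
    (hroot : root p.1 p.2 + p.2 ≠ 0) : ContinuousAt (Function.uncurry radicandSlope) p := by
  have := continuous_root
  unfold Function.uncurry radicandSlope radicandSlopePoly den
  unfold Function.uncurry at this
  fun_prop (disch := assumption)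

lemma rescaled_bounds {n N : ℝ} (hn : 1 < n) (hN : 2 * n ≤ N) :
    0 < 1 / n ∧ 1 / n < 1 ∧ 2 * (1 / n) ≤ N / n ^ 2 := by
  have hn0 : 0 < n := by linarith
  refine ⟨by positivity, (div_lt_one hn0).2 hn, ?_⟩
  rw [le_div_iff₀ (by positivity)]
  field_simp
  linarith

lemma B₁_eq_mul_root {n : ℝ} (N : ℝ) (hn : 0 < n) :
    B₁ n N = n ^ 3 * root (1 / n) (N / n ^ 2) := by
  have harg : n * (n - 1) * N * (N - n - 1)
      = (n ^ 3) ^ 2 * ((1 - 1 / n) * (N / n ^ 2) * (N / n ^ 2 - 1 / n - (1 / n) ^ 2)) := by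
    field_simp
  rw [B₁, harg, Real.sqrt_mul (sq_nonneg _), Real.sqrt_sq (by positivity), root]

lemma den_rescaled {n : ℝ} (N : ℝ) (hn : 0 < n) :
    n ^ 2 * (n - 1) ^ 2 + 4 * n * (N - n - 1) * (N - 2 * n)
      = n ^ 5 * den (1 / n) (N / n ^ 2) := by
  unfold den
  field_simp
  ring

lemma tau3_radicand_eq {n N : ℝ} (hn : 0 < n) (hN : N ≠ 0)
    (hden : den (1 / n) (N / n ^ 2) ≠ 0) :
    2 * N * (n * A₁ n N + 2 * (N - n - 1) ^ 2 * B₁ n N)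
        / (n ^ 2 * (n - 1) ^ 2 + 4 * n * (N - n - 1) * (N - 2 * n))
      = N ^ 2 * radicand (1 / n) (N / n ^ 2) := by
  rw [den_rescaled N hn, B₁_eq_mul_root N hn, radicand]
  unfold A₁ num
  field_simp
  ring

lemma tau3_eq {n N : ℕ} (hn : 1 < n) (hN : 2 * n ≤ N) :
    tau3 n N = N ^ 2 * √(radicand (1 / n) (N / n ^ 2)) := by
  have hn' : (1 : ℝ) < n := by exact_mod_cast hn
  have hN' : 2 * (n : ℝ) ≤ N := by exact_mod_cast hN
  obtain ⟨ht0, ht1, hx⟩ := rescaled_bounds hn' hN'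
  rw [tau3, tau3_radicand_eq (by linarith) (by linarith : (0 : ℝ) < N).ne' (den_pos ht0 ht1 hx).ne',
    Real.sqrt_mul (sq_nonneg _), Real.sqrt_sq (Nat.cast_nonneg _)]
  ring

lemma sq_mul_sqrt_sub_div_rpow {N g : ℝ} (hN : 0 < N) (hg : 0 ≤ g) :
    (N ^ 2 * √g - √2 * N ^ 2) / N ^ ((3 : ℝ) / 2) = √N * (g - 2) / (√g + √2) := by
  have hrpow : N ^ ((3 : ℝ) / 2) = N * √N := by
    rw [show (3 : ℝ) / 2 = 1 + 1 / 2 by norm_num, Real.rpow_add hN, Real.rpow_one,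
      ← Real.sqrt_eq_rpow]
  have hsum : 0 < √g + √2 := by positivity
  rw [hrpow, div_eq_div_iff (by positivity) hsum.ne']
  linear_combination N ^ 2 * Real.sq_sqrt hg - N ^ 2 * Real.sq_sqrt zero_le_two
    - N * (g - 2) * Real.sq_sqrt hN.le

lemma tau3_sub_div_rpow_eq {n N : ℕ} (hn : 1 < n) (hN : 2 * n ≤ N)
    (hg : 0 ≤ radicand (1 / n) (N / n ^ 2)) :
    (tau3 n N - √2 * N ^ 2) / (N : ℝ) ^ ((3 : ℝ) / 2)
      = √(N / n ^ 2 : ℝ) * radicandSlope (1 / n) (N / n ^ 2)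
          / (√(radicand (1 / n) (N / n ^ 2)) + √2) := by
  have hn' : (1 : ℝ) < n := by exact_mod_cast hn
  have hN' : 2 * (n : ℝ) ≤ N := by exact_mod_cast hN
  obtain ⟨ht0, ht1, hx⟩ := rescaled_bounds hn' hN'
  have hsqrtN : √(N : ℝ) = √(N / n ^ 2 : ℝ) * n := by
    rw [Real.sqrt_div' _ (sq_nonneg _), Real.sqrt_sq (by linarith)]
    field_simp
  rw [tau3_eq hn hN, sq_mul_sqrt_sub_div_rpow (by linarith) hg, radicand_sub_two ht0 ht1 hx,
    hsqrtN]
  field_simp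

end Tau3

open Tau3

theorem tau3_asymptotics_general (δ : ℝ) (hδ1 : 0 < δ)
    (n N : ℕ → ℕ)
    (hn_top : Tendsto (fun k => (n k : ℝ)) atTop atTop)
    (hNn1 : ∀ k, 2 * n k ≤ N k)
    (hratio : Tendsto (fun k => (N k : ℝ) / (n k : ℝ) ^ 2) atTop (nhds δ)) :
    Tendsto (fun k => (tau3 (n k) (N k) - Real.sqrt 2 * (N k : ℝ) ^ 2)
        / (N k : ℝ) ^ ((3 : ℝ) / 2))
      atTop (nhds (-(Real.sqrt (2 * δ)) / 8)) := by
  have hpoint : Tendsto (fun k => (1 / (n k : ℝ), (N k : ℝ) / (n k : ℝ) ^ 2)) atTop (𝓝 (0, δ)) :=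
    (tendsto_const_nhds.div_atTop hn_top).prodMk_nhds hratio
  have hden : δ * den 0 δ ≠ 0 := by rw [den_zero]; positivity
  have hroot : root 0 δ + δ ≠ 0 := by rw [root_zero hδ1.le]; positivity
  have hradicand : Tendsto (fun k => radicand (1 / n k) (N k / n k ^ 2)) atTop (𝓝 2) := by
    simpa only [Function.comp_def, Function.uncurry_apply_pair, radicand_zero hδ1]
      using (continuousAt_radicand hden).tendsto.comp hpoint
  have hslope : Tendsto (fun k => radicandSlope (1 / n k) (N k / n k ^ 2)) atTop
      (𝓝 (-1 / 2)) := by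
    simpa only [Function.comp_def, Function.uncurry_apply_pair, radicandSlope_zero hδ1]
      using (continuousAt_radicandSlope hden hroot).tendsto.comp hpoint
  have hlimit : -√(2 * δ) / 8 = √δ * (-1 / 2) / (√2 + √2) := by
    rw [Real.sqrt_mul zero_le_two]
    field_simp
    linear_combination -4 * Real.sq_sqrt (zero_le_two (α := ℝ))
  rw [hlimit]
  refine ((hratio.sqrt.mul hslope).div (hradicand.sqrt.add tendsto_const_nhds)
    (by positivity)).congr' ?_
  filter_upwards [hn_top.eventually_gt_atTop 1,
    hradicand.eventually (eventually_ge_nhds zero_lt_two)] with k hn hg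
  exact (tau3_sub_div_rpow_eq (by exact_mod_cast hn) (hNn1 k) hg).symm

/-- Asymptotics of the degree-3 bound in the regime `N_k ∼ δ n_k²`, `0 < δ ≤ 1/2`:
`(τ₃(n_k, N_k) − √2·N_k²)/N_k^{3/2} → −√(2δ)/8`. -/
theorem tau3_asymptotics (δ : ℝ) (hδ1 : 0 < δ) (hδ2 : δ ≤ 1 / 2)
    (n N : ℕ → ℕ) (hn : ∀ k, 0 < n k) (hN : ∀ k, 0 < N k)
    (hn_top : Tendsto (fun k => (n k : ℝ)) atTop atTop)
    (hNn1 : ∀ k, 2 * n k ≤ N k) (hNn2 : ∀ k, N k ≤ n k * (n k + 3) / 2)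
    (hratio : Tendsto (fun k => (N k : ℝ) / (n k : ℝ) ^ 2) atTop (nhds δ)) :
    Tendsto (fun k => (tau3 (n k) (N k) - Real.sqrt 2 * (N k : ℝ) ^ 2)
        / (N k : ℝ) ^ ((3 : ℝ) / 2))
      atTop (nhds (-(Real.sqrt (2 * δ)) / 8)) :=
  tau3_asymptotics_general δ hδ1 n N hn_top hNn1 hratio
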